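/- arXiv:2511.16058 — 6 statements merged into one kernel-verified Lean document; each statement's English description precedes it below -/
import Mathlib

section
/- Let n ≥ 2 be an integer, p > 1 a real number, A a symmetric n×n real matrix, and s a real number. Set h := (p−1)·A₁₁ + Σ_{i=2}^n A_{ii} + s and c₁ := 1 + min{1, (p−1)²/(2n−1)}. Then Σ_{i,j=1}^n A_{ij}² ≥ h²/(2n−1) − 2(p−1)·h·A₁₁/(2n−1) + c₁·Σ_{i=1}^n A_{1i}² − s²/n. -/
/-!
Write `a = A₁₁`, `T = Σ_{i≥2} A_{ii}`, `Q = Σ_{i≥2} A_{ii}²` and `R = Σ_{i≥2} A_{1i}²`.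
The Frobenius norm dominates `a² + 2R + Q` (diagonal, first row and first column), and
`h² − 2(p−1)ha = (T+s)² − (p−1)²a²`. Weighted Cauchy–Schwarz with weights `n − 1` and `n`,
together with `T² ≤ (n−1)Q`, gives `(T+s)²/(2n−1) ≤ Q + s²/n`; the term `(p−1)²a²` pays for
the `min` in `c₁` on the diagonal entry and the second copy of `R` pays for it on the rest of
the first row.
-/

open Finset

theorem sq_add_div_add_le {x y α β : ℝ} (hα : 0 < α) (hβ : 0 < β) :
    (x + y) ^ 2 / (α + β) ≤ x ^ 2 / α + y ^ 2 / β := by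
  rw [div_add_div _ _ hα.ne' hβ.ne', div_le_div_iff₀ (by positivity) (by positivity)]
  nlinarith [sq_nonneg (β * x - α * y), mul_pos hα hβ]

theorem sq_sum_erase_le {ι : Type*} [Fintype ι] [DecidableEq ι] (f : ι → ℝ) (i₀ : ι) :
    (∑ i ∈ univ.erase i₀, f i) ^ 2 ≤ (Fintype.card ι - 1) * ∑ i ∈ univ.erase i₀, f i ^ 2 := by
  have hcard : ((univ.erase i₀).card : ℝ) = Fintype.card ι - 1 := by
    rw [card_erase_of_mem (mem_univ i₀), card_univ,
      Nat.cast_sub (Fintype.card_pos_iff.mpr ⟨i₀⟩), Nat.cast_one]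
  rw [← hcard]
  exact sq_sum_le_card_mul_sum_sq

section

variable {ι R : Type*} [Fintype ι] [DecidableEq ι]
  [CommRing R] [LinearOrder R] [IsStrictOrderedRing R]

theorem Matrix.IsSymm.sq_add_sq_le_sum_sq_row {A : Matrix ι ι R} (hA : A.IsSymm) {i₀ i : ι}
    (hi : i ≠ i₀) : A i₀ i ^ 2 + A i i ^ 2 ≤ ∑ j, A i j ^ 2 := by
  calc A i₀ i ^ 2 + A i i ^ 2 = ∑ j ∈ {i₀, i}, A i j ^ 2 := by
        rw [sum_pair hi.symm, hA.apply i₀ i]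
    _ ≤ ∑ j, A i j ^ 2 :=
        sum_le_sum_of_subset_of_nonneg (subset_univ _) fun j _ _ => sq_nonneg _

theorem Matrix.IsSymm.sum_sq_diag_row_col_le {A : Matrix ι ι R} (hA : A.IsSymm) (i₀ : ι) :
    A i₀ i₀ ^ 2 + 2 * ∑ i ∈ univ.erase i₀, A i₀ i ^ 2 + ∑ i ∈ univ.erase i₀, A i i ^ 2 ≤
      ∑ i, ∑ j, A i j ^ 2 := by
  have hrest : ∑ i ∈ univ.erase i₀, (A i₀ i ^ 2 + A i i ^ 2) ≤
      ∑ i ∈ univ.erase i₀, ∑ j, A i j ^ 2 :=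
    sum_le_sum fun i hi => hA.sq_add_sq_le_sum_sq_row (ne_of_mem_erase hi)
  rw [sum_add_distrib] at hrest
  rw [← add_sum_erase univ _ (mem_univ i₀), ← add_sum_erase univ _ (mem_univ i₀)]
  linarith

end

theorem scalar_hessian_estimate {N k a R Q T s h : ℝ} (hN : 1 < N) (hR : 0 ≤ R)
    (hT : T ^ 2 ≤ (N - 1) * Q) (hh : h = k * a + T + s) :
    h ^ 2 / (2 * N - 1) - 2 * k * h * a / (2 * N - 1)
      + (1 + min 1 (k ^ 2 / (2 * N - 1))) * (a ^ 2 + R) - s ^ 2 / N ≤ a ^ 2 + 2 * R + Q := by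
  have hα : 0 < N - 1 := by linarith
  have hcompleted : h ^ 2 / (2 * N - 1) - 2 * k * h * a / (2 * N - 1) =
      (T + s) ^ 2 / (N - 1 + N) - k ^ 2 * a ^ 2 / (2 * N - 1) := by
    rw [show 2 * N - 1 = N - 1 + N by ring, ← sub_div, ← sub_div, hh]
    ring
  have hTs : (T + s) ^ 2 / (N - 1 + N) ≤ Q + s ^ 2 / N :=
    (sq_add_div_add_le hα (by linarith)).trans
      (add_le_add_left ((div_le_iff₀' hα).mpr hT) _)
  have hmin : min 1 (k ^ 2 / (2 * N - 1)) * (a ^ 2 + R) ≤ k ^ 2 * a ^ 2 / (2 * N - 1) + R := by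
    rw [mul_add, mul_div_right_comm]
    gcongr
    · exact min_le_right _ _
    · exact mul_le_of_le_one_left hR (min_le_left _ _)
  rw [hcompleted]
  linarith

/-- Pointwise linear-algebra core of estimate (3.5.2): for a symmetric `n × n` matrix `A`
(`n ≥ 2`), `p > 1`, `s ∈ ℝ`, with `h = (p−1)A₁₁ + Σ_{i≥2} A_{ii} + s` and
`c₁ = 1 + min{1, (p−1)²/(2n−1)}`, one has
`Σ_{i,j} A_{ij}² ≥ h²/(2n−1) − 2(p−1)hA₁₁/(2n−1) + c₁ Σ_i A_{1i}² − s²/n`. -/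
theorem hessian_estimate (n : ℕ) (hn : 2 ≤ n) (p : ℝ)
    (A : Matrix (Fin n) (Fin n) ℝ) (hA : A.IsSymm) (s : ℝ)
    (h c₁ : ℝ)
    (hh : h = (p - 1) * A ⟨0, by omega⟩ ⟨0, by omega⟩ +
      ∑ i ∈ univ.erase ⟨0, by omega⟩, A i i + s)
    (hc₁ : c₁ = 1 + min 1 ((p - 1) ^ 2 / (2 * (n : ℝ) - 1))) :
    ∑ i : Fin n, ∑ j : Fin n, (A i j) ^ 2 ≥
      h ^ 2 / (2 * (n : ℝ) - 1)
        - 2 * (p - 1) * h * A ⟨0, by omega⟩ ⟨0, by omega⟩ / (2 * (n : ℝ) - 1)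
        + c₁ * ∑ i : Fin n, (A ⟨0, by omega⟩ i) ^ 2
        - s ^ 2 / (n : ℝ) := by
  set i₀ : Fin n := ⟨0, by omega⟩
  have hN : (1 : ℝ) < n := by exact_mod_cast hn
  have hT := sq_sum_erase_le (fun i => A i i) i₀
  rw [Fintype.card_fin] at hT
  have hR : 0 ≤ ∑ i ∈ univ.erase i₀, A i₀ i ^ 2 := sum_nonneg fun i _ => sq_nonneg _
  rw [hc₁, ← add_sum_erase univ (fun i => A i₀ i ^ 2) (mem_univ i₀)]
  exact (scalar_hessian_estimate hN hR hT hh).trans (hA.sum_sq_diag_row_col_le i₀)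
end

section
/- Let n ≥ 2 be an integer, R > 0, and let s : (0,R) → ℝ be a positive differentiable function. Set m_K := (n−1)·s'/s. Let m, φ : (0,R) → ℝ with m differentiable, and assume that for all r ∈ (0,R): m'(r) − m_K'(r) ≤ −(m(r)² − m_K(r)²)/(n−1) − φ(r) (with m_K differentiable). Then for all r ∈ (0,R), the function u(r) := s(r)²·(m(r) − m_K(r)) is differentiable with u'(r) ≤ −s(r)²·((m(r) − m_K(r))²/(n−1) + φ(r)); in particular u'(r) ≤ −s(r)²·φ(r). -/
open Set

/-- Differential inequality (2.2.2): if `s > 0` is differentiable on `(0,R)` with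
derivative `s'`, `m_K = (n−1)s'/s`, `m` and `m_K` are differentiable with derivatives
`m'`, `m_K'`, and `m' − m_K' ≤ −(m² − m_K²)/(n−1) − φ` on `(0,R)`, then
`u := s²(m − m_K)` is differentiable on `(0,R)` with derivative bounded above by
`−s²((m − m_K)²/(n−1) + φ)`, hence by `−s²φ`. -/
theorem riccati_comparison_derivative (n : ℕ) (hn : 2 ≤ n) (R : ℝ) (hR : 0 < R)
    (s s' m m' mK mK' φ : ℝ → ℝ)
    (hs_pos : ∀ r ∈ Ioo (0 : ℝ) R, 0 < s r)
    (hs : ∀ r ∈ Ioo (0 : ℝ) R, HasDerivAt s (s' r) r)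
    (hmK_def : ∀ r ∈ Ioo (0 : ℝ) R, mK r = ((n : ℝ) - 1) * s' r / s r)
    (hm : ∀ r ∈ Ioo (0 : ℝ) R, HasDerivAt m (m' r) r)
    (hmK : ∀ r ∈ Ioo (0 : ℝ) R, HasDerivAt mK (mK' r) r)
    (hineq : ∀ r ∈ Ioo (0 : ℝ) R,
      m' r - mK' r ≤ -((m r) ^ 2 - (mK r) ^ 2) / ((n : ℝ) - 1) - φ r) :
    ∀ r ∈ Ioo (0 : ℝ) R, ∃ d : ℝ,
      HasDerivAt (fun t => (s t) ^ 2 * (m t - mK t)) d r ∧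
      d ≤ -(s r) ^ 2 * ((m r - mK r) ^ 2 / ((n : ℝ) - 1) + φ r) ∧
      d ≤ -(s r) ^ 2 * φ r := by
  intro r hr
  have hspos := hs_pos r hr
  have hn1 : (0:ℝ) < (n:ℝ) - 1 := by
    have : (2:ℝ) ≤ n := by exact_mod_cast hn
    linarith
  have hd : HasDerivAt (fun t => (s t) ^ 2 * (m t - mK t))
      (2 * s r ^ 1 * s' r * (m r - mK r) + s r ^ 2 * (m' r - mK' r)) r := by
    have := ((hs r hr).pow 2).mul ((hm r hr).sub (hmK r hr))
    exact this.congr_deriv (by norm_num [Pi.sub_apply, Pi.pow_apply])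
  have hs' : s' r = mK r * s r / ((n:ℝ) - 1) := by
    have := hmK_def r hr
    field_simp at this ⊢
    linarith [this]
  have hin := hineq r hr
  have hsq : (0:ℝ) ≤ s r ^ 2 := sq_nonneg _
  have key := mul_le_mul_of_nonneg_left hin hsq
  have h1 : 2 * s r ^ 1 * s' r * (m r - mK r) + s r ^ 2 * (m' r - mK' r)
      ≤ -(s r) ^ 2 * ((m r - mK r) ^ 2 / ((n : ℝ) - 1) + φ r) := by
    have heq : 2 * s r ^ 1 * (mK r * s r / ((n:ℝ)-1)) * (m r - mK r)
        + s r ^ 2 * (-(m r ^ 2 - mK r ^ 2) / ((n:ℝ)-1) - φ r)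
        = -(s r) ^ 2 * ((m r - mK r) ^ 2 / ((n : ℝ) - 1) + φ r) := by
      field_simp
      ring
    rw [hs']
    linarith [key, heq]
  have h2 : -(s r) ^ 2 * ((m r - mK r) ^ 2 / ((n : ℝ) - 1) + φ r) ≤ -(s r) ^ 2 * φ r := by
    have : 0 ≤ s r ^ 2 * ((m r - mK r) ^ 2 / ((n : ℝ) - 1)) :=
      mul_nonneg hsq (div_nonneg (sq_nonneg _) hn1.le)
    nlinarith
  exact ⟨_, hd, h1, h1.trans h2⟩
end

section
/- Let n ≥ 2 be an integer, K > 0, θ ≥ 0, R > 0. Define s(r) := sinh(√K·r)/√K and m_K(r) := (n−1)·√K·coth(√K·r). Let m : (0,R) → ℝ be continuously differentiable and v : [0,R) → ℝ be continuously differentiable with |v(r)| ≤ θ for all r, and suppose that for all r ∈ (0,R): m'(r) ≤ −m(r)²/(n−1) + (n−1)·K − v'(r), and that s(r)²·(m(r) − m_K(r)) → 0 as r → 0⁺. Then for all r ∈ (0,R): m(r) ≤ m_K(r) + 2θ, and consequently m(r) ≤ (n−1)·√K + (n−1)/r + 2θ. -/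
open Set Filter

lemma aux_coth (x : ℝ) : x * Real.cosh x ≤ (x + 1) * Real.sinh x := by
  rw [Real.cosh_eq, Real.sinh_eq]
  have hp := Real.exp_pos x
  have hp' := Real.exp_pos (-x)
  have hmul : Real.exp x * Real.exp (-x) = 1 := by
    rw [← Real.exp_add]; simp
  have h2x : Real.exp x ^ 2 = Real.exp (2 * x) := by
    rw [two_mul, Real.exp_add, sq]
  have hle : 2 * x + 1 ≤ Real.exp x ^ 2 := by
    rw [h2x]; linarith [Real.add_one_le_exp (2 * x)]
  nlinarith [mul_nonneg hp'.le (by nlinarith : (0:ℝ) ≤ Real.exp x ^ 2 - 1 - 2 * x), hmul, hp, hp']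

set_option maxHeartbeats 1000000 in
/-- ODE comparison content of the Laplacian comparison theorem (Theorem 2.1, `K > 0`):
with `s(r) = sinh(√K r)/√K`, `m_K(r) = (n−1)√K·coth(√K r)`, if `m` is `C¹` on `(0,R)`,
`v` is `C¹` on `[0,R)` with `|v| ≤ θ`, the Riccati inequality
`m' ≤ −m²/(n−1) + (n−1)K − v'` holds on `(0,R)`, and `s²(m − m_K) → 0` as `r → 0⁺`,
then `m ≤ m_K + 2θ`, hence `m(r) ≤ (n−1)√K + (n−1)/r + 2θ`, on `(0,R)`. -/
theorem laplacian_comparison_ODE (n : ℕ) (hn : 2 ≤ n) (K θ R : ℝ)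
    (hK : 0 < K) (hθ : 0 ≤ θ) (hR : 0 < R)
    (s mK m m' v v' : ℝ → ℝ)
    (hs : ∀ r : ℝ, s r = Real.sinh (Real.sqrt K * r) / Real.sqrt K)
    (hmK : ∀ r : ℝ, mK r = ((n : ℝ) - 1) * Real.sqrt K *
      (Real.cosh (Real.sqrt K * r) / Real.sinh (Real.sqrt K * r)))
    (hm : ∀ r ∈ Ioo (0 : ℝ) R, HasDerivAt m (m' r) r)
    (hm' : ContinuousOn m' (Ioo (0 : ℝ) R))
    (hv : ∀ r ∈ Ico (0 : ℝ) R, HasDerivWithinAt v (v' r) (Ico (0 : ℝ) R) r)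
    (hv' : ContinuousOn v' (Ico (0 : ℝ) R))
    (hvθ : ∀ r ∈ Ico (0 : ℝ) R, |v r| ≤ θ)
    (hriccati : ∀ r ∈ Ioo (0 : ℝ) R,
      m' r ≤ -(m r) ^ 2 / ((n : ℝ) - 1) + ((n : ℝ) - 1) * K - v' r)
    (hlim : Filter.Tendsto (fun r => (s r) ^ 2 * (m r - mK r))
      (nhdsWithin 0 (Ioi (0 : ℝ))) (nhds 0)) :
    ∀ r ∈ Ioo (0 : ℝ) R,
      m r ≤ mK r + 2 * θ ∧
      m r ≤ ((n : ℝ) - 1) * Real.sqrt K + ((n : ℝ) - 1) / r + 2 * θ := by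
  have hn' : (2:ℝ) ≤ (n:ℝ) := by exact_mod_cast hn
  set a := Real.sqrt K with hadef
  have ha : 0 < a := Real.sqrt_pos.2 hK
  have ha2 : a ^ 2 = K := Real.sq_sqrt hK.le
  set N := ((n : ℝ) - 1) with hNdef
  have hN : (1:ℝ) ≤ N := by rw [hNdef]; linarith
  have hN0 : (0:ℝ) < N := by linarith
  -- the comparison function G
  set G : ℝ → ℝ := fun t => Real.sinh (a*t)^2/a^2 * (m t + v t - θ)
      - N/a * (Real.sinh (a*t) * Real.cosh (a*t)) with hGdef
  -- derivative of G on (0, R)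
  have hGd : ∀ x ∈ Ioo (0:ℝ) R, HasDerivAt G
      (2 * Real.sinh (a*x) * (Real.cosh (a*x) * a) / a^2 * (m x + v x - θ)
        + Real.sinh (a*x)^2/a^2 * (m' x + v' x)
        - N/a * ((Real.cosh (a*x) * a) * Real.cosh (a*x)
            + Real.sinh (a*x) * (Real.sinh (a*x) * a))) x := by
    intro x hx
    have hat : HasDerivAt (fun t : ℝ => a * t) a x := by
      simpa using (hasDerivAt_id x).const_mul a
    have h1 := hat.sinh
    have h2 := hat.cosh
    have hvAt : HasDerivAt v (v' x) x := by
      refine (hv x (Ioo_subset_Ico_self hx)).hasDerivAt ?_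
      exact mem_nhds_iff.2 ⟨Ioo 0 R, Ioo_subset_Ico_self, isOpen_Ioo, hx⟩
    have hmv : HasDerivAt (fun t => m t + v t - θ) (m' x + v' x) x :=
      ((hm x hx).add hvAt).sub_const θ
    have hs2 : HasDerivAt (fun t => Real.sinh (a*t)^2/a^2)
        (2 * Real.sinh (a*x) * (Real.cosh (a*x) * a) / a^2) x := by
      have := (h1.pow 2).div_const (a^2)
      simpa [pow_one] using this
    have hpr : HasDerivAt (fun t => Real.sinh (a*t) * Real.cosh (a*t))
        ((Real.cosh (a*x) * a) * Real.cosh (a*x) + Real.sinh (a*x) * (Real.sinh (a*x) * a)) x :=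
      h1.mul h2
    exact (hs2.mul hmv).sub (hpr.const_mul (N/a))
  -- the derivative is nonpositive
  have hGd0 : ∀ x ∈ Ioo (0:ℝ) R, deriv G x ≤ 0 := by
    intro x hx
    rw [(hGd x hx).deriv]
    have hshp : 0 < Real.sinh (a*x) := Real.sinh_pos_iff.2 (mul_pos ha hx.1)
    have hchp : 0 < Real.cosh (a*x) := Real.cosh_pos _
    set sh := Real.sinh (a*x)
    set ch := Real.cosh (a*x)
    have hvx := hvθ x ⟨hx.1.le, hx.2⟩
    have hvx1 : v x ≤ θ := (abs_le.1 hvx).2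
    -- Riccati, multiplied through
    have h := hriccati x hx
    have hcancel : N * (-(m x) ^ 2 / N) = -(m x) ^ 2 := by field_simp
    have h2 := mul_le_mul_of_nonneg_left h hN0.le
    rw [mul_sub, mul_add, hcancel, ← ha2] at h2
    have h3 := mul_le_mul_of_nonneg_left h2 (sq_nonneg sh)
    -- polynomial form of the goal
    have hP : N * (a^2 * (2 * sh * (ch * a) / a^2 * (m x + v x - θ)
        + sh^2/a^2 * (m' x + v' x)
        - N/a * ((ch * a) * ch + sh * (sh * a)))) ≤ 0 := by
      have hEeq : a^2 * (2 * sh * (ch * a) / a^2 * (m x + v x - θ)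
          + sh^2/a^2 * (m' x + v' x)
          - N/a * ((ch * a) * ch + sh * (sh * a)))
          = 2 * a * sh * ch * (m x + v x - θ) + sh^2 * (m' x + v' x)
            - a^2 * N * (ch^2 + sh^2) := by
        field_simp
      rw [hEeq]
      have hcross : 0 ≤ 2 * a * N * sh * ch * (θ - v x) := by
        have : 0 ≤ θ - v x := by linarith
        positivity
      nlinarith [h3, sq_nonneg (sh * m x - N * a * ch), hcross]
    rw [show (0:ℝ) = N * 0 by ring] at hP
    have h6 := le_of_mul_le_mul_left hP hN0
    rw [show (0:ℝ) = a^2 * 0 by ring] at h6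
    exact le_of_mul_le_mul_left h6 (pow_pos ha 2)
  -- continuity, differentiability, antitonicity
  have hGcont : ContinuousOn G (Ioo 0 R) := fun x hx =>
    ((hGd x hx).continuousAt).continuousWithinAt
  have hGdiff : DifferentiableOn ℝ G (interior (Ioo (0:ℝ) R)) := by
    rw [interior_Ioo]
    exact fun x hx => ((hGd x hx).differentiableAt).differentiableWithinAt
  have hanti : AntitoneOn G (Ioo 0 R) := by
    refine antitoneOn_of_deriv_nonpos (convex_Ioo 0 R) hGcont hGdiff ?_
    rw [interior_Ioo]; exact hGd0
  -- G tends to 0 at 0⁺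
  have hT2 : Tendsto (fun t => Real.sinh (a*t)^2/a^2 * (v t - θ)) (nhdsWithin 0 (Ioi (0:ℝ)))
      (nhds 0) := by
    have hc : Continuous (fun t : ℝ => Real.sinh (a*t)^2/a^2 * (2*θ)) := by
      continuity
    have hg : Tendsto (fun t : ℝ => Real.sinh (a*t)^2/a^2 * (2*θ))
        (nhdsWithin 0 (Ioi (0:ℝ))) (nhds 0) := by
      have := hc.tendsto 0
      rw [show Real.sinh (a*0)^2/a^2*(2*θ) = 0 by simp] at this
      exact this.mono_left nhdsWithin_le_nhds
    refine squeeze_zero_norm' ?_ hg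
    · filter_upwards [Ioo_mem_nhdsGT_of_mem ⟨le_refl (0:ℝ), hR⟩] with t ht
      have hvt := hvθ t ⟨ht.1.le, ht.2⟩
      have h1 : |v t - θ| ≤ 2 * θ := by
        rw [abs_le] at hvt ⊢; constructor <;> linarith [hvt.1, hvt.2]
      have hnn : 0 ≤ Real.sinh (a*t)^2/a^2 := by positivity
      calc ‖Real.sinh (a*t)^2/a^2 * (v t - θ)‖
          = Real.sinh (a*t)^2/a^2 * |v t - θ| := by
            rw [Real.norm_eq_abs, abs_mul, abs_of_nonneg hnn]
        _ ≤ Real.sinh (a*t)^2/a^2 * (2*θ) := by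
            exact mul_le_mul_of_nonneg_left h1 hnn
  have hGlim : Tendsto G (nhdsWithin 0 (Ioi (0:ℝ))) (nhds 0) := by
    have hsum := hlim.add hT2
    rw [add_zero] at hsum
    refine hsum.congr' ?_
    filter_upwards [self_mem_nhdsWithin] with t (ht : 0 < t)
    have hsh : Real.sinh (a*t) ≠ 0 := ne_of_gt (Real.sinh_pos_iff.2 (mul_pos ha ht))
    simp only [hGdef]
    rw [hs t, hmK t]
    field_simp
    ring
  -- G ≤ 0 on (0, R)
  have hG0 : ∀ x ∈ Ioo (0:ℝ) R, G x ≤ 0 := by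
    intro x hx
    refine ge_of_tendsto hGlim ?_
    filter_upwards [Ioo_mem_nhdsGT_of_mem ⟨le_refl (0:ℝ), hx.1⟩] with t ht
    exact hanti ⟨ht.1, ht.2.trans hx.2⟩ hx ht.2.le
  -- conclusion
  intro r hr
  have hshp : 0 < Real.sinh (a*r) := Real.sinh_pos_iff.2 (mul_pos ha hr.1)
  have hchp : 0 < Real.cosh (a*r) := Real.cosh_pos _
  set sh := Real.sinh (a*r)
  set ch := Real.cosh (a*r)
  have hvr := hvθ r ⟨hr.1.le, hr.2⟩
  have hvr1 : -θ ≤ v r := (abs_le.1 hvr).1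
  have hGr := hG0 r hr
  rw [hGdef] at hGr
  simp only at hGr
  -- clear denominators: sh^2 * (m r + v r - θ) ≤ N * a * (sh * ch)
  have h4 : sh^2 * (m r + v r - θ) ≤ N * a * (sh * ch) := by
    have h5 := mul_le_mul_of_nonneg_left hGr (sq_nonneg a)
    have e1 : a^2 * (sh^2/a^2 * (m r + v r - θ) - N/a * (sh * ch))
        = sh^2 * (m r + v r - θ) - N * a * (sh * ch) := by
      field_simp
    rw [e1, mul_zero] at h5
    linarith
  have h7 : (m r - 2*θ) * sh ≤ N * a * ch := by
    nlinarith [h4, hshp, hvr1]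
  have h8 : m r - 2*θ ≤ N * a * ch / sh := (le_div_iff₀ hshp).2 h7
  have part1 : m r ≤ mK r + 2 * θ := by
    rw [hmK r]
    have : N * a * (ch / sh) = N * a * ch / sh := by ring
    rw [this]
    linarith
  refine ⟨part1, ?_⟩
  -- coth bound
  have hx0 : 0 < a * r := mul_pos ha hr.1
  have haux := aux_coth (a*r)
  have h9 : ch / sh ≤ (a*r + 1) / (a*r) := by
    rw [div_le_div_iff₀ hshp hx0]
    nlinarith [haux]
  have h10 : N * a * (ch / sh) ≤ N * a * ((a*r + 1) / (a*r)) :=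
    mul_le_mul_of_nonneg_left h9 (by positivity)
  have h11 : N * a * ((a*r + 1) / (a*r)) = N * a + N / r := by
    have hr0 : r ≠ 0 := ne_of_gt hr.1
    field_simp
  rw [hmK r] at part1
  linarith [h10, h11 ▸ h10]
end

section
/- Let n ≥ 2 be an integer, θ ≥ 0, R > 0. Let m : (0,R) → ℝ be continuously differentiable and v : [0,R) → ℝ be continuously differentiable with |v(r)| ≤ θ for all r, and suppose that for all r ∈ (0,R): m'(r) ≤ −m(r)²/(n−1) − v'(r), and that r²·(m(r) − (n−1)/r) → 0 as r → 0⁺. Then for all r ∈ (0,R): m(r) ≤ (n−1)/r + 2θ. -/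
/-!
With `a = n - 1`, the quantity `G(r) = r²(m + v - θ) - a r = r²(m - a/r) + r²(v - θ)` tends to `0`
at `0⁺`, and the Riccati inequality makes it nonincreasing: completing the square gives
`r² m' ≤ -(r m)²/a - r² v' ≤ a - 2 r m - r² v'`, so `G' ≤ 2 r (v - θ) ≤ 0`. Hence `G ≤ 0`,
i.e. `r m ≤ a - r (v - θ) ≤ a + 2 θ r`.
-/

open Set Filter Topology

theorem le_of_hasDerivAt_nonpos_of_tendsto {f f' : ℝ → ℝ} {a b L r : ℝ}
    (hf : ∀ x ∈ Ioo a b, HasDerivAt f (f' x) x) (hf' : ∀ x ∈ Ioo a b, f' x ≤ 0)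
    (hlim : Tendsto f (𝓝[>] a) (𝓝 L)) (hr : r ∈ Ioo a b) : f r ≤ L := by
  have hanti : AntitoneOn f (Ioo a b) := by
    refine antitoneOn_of_hasDerivWithinAt_nonpos (f' := f') (convex_Ioo a b)
      (fun x hx ↦ (hf x hx).continuousAt.continuousWithinAt) ?_ ?_
    · intro x hx
      rw [interior_Ioo] at hx ⊢
      exact (hf x hx).hasDerivWithinAt
    · simpa only [interior_Ioo] using hf'
  refine ge_of_tendsto hlim ?_
  filter_upwards [Ioo_mem_nhdsGT hr.1] with x hx
  exact hanti ⟨hx.1, hx.2.trans hr.2⟩ hr hx.2.le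

theorem neg_sq_div_le_sub_two_mul {a : ℝ} (ha : 0 < a) (y : ℝ) : -y ^ 2 / a ≤ a - 2 * y := by
  rw [div_le_iff₀ ha]
  nlinarith [sq_nonneg (y - a)]

def riccatiLyapunov (a θ : ℝ) (m v : ℝ → ℝ) (r : ℝ) : ℝ :=
  r ^ 2 * (m r + v r - θ) - a * r

section

variable {a θ R : ℝ} {m m' v v' : ℝ → ℝ}

theorem hasDerivAt_riccatiLyapunov {x : ℝ} (hm : HasDerivAt m (m' x) x)
    (hv : HasDerivAt v (v' x) x) :
    HasDerivAt (riccatiLyapunov a θ m v)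
      (2 * x * (m x + v x - θ) + x ^ 2 * (m' x + v' x) - a) x := by
  have hsq : HasDerivAt (fun r ↦ r ^ 2) (2 * x) x := by simpa using hasDerivAt_pow 2 x
  have h := (hsq.mul ((hm.add hv).sub_const θ)).sub ((hasDerivAt_id x).const_mul a)
  exact h.congr_deriv (by simp only [Pi.add_apply, mul_one])

theorem tendsto_riccatiLyapunov
    (hm : Tendsto (fun r ↦ r ^ 2 * (m r - a / r)) (𝓝[>] 0) (𝓝 0))
    (hv : IsBoundedUnder (· ≤ ·) (𝓝[>] 0) (fun r ↦ ‖v r - θ‖)) :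
    Tendsto (riccatiLyapunov a θ m v) (𝓝[>] 0) (𝓝 0) := by
  have hsq : Tendsto (fun r : ℝ ↦ r ^ 2) (𝓝[>] 0) (𝓝 0) := by
    simpa using ((continuous_pow 2).tendsto (0 : ℝ)).mono_left nhdsWithin_le_nhds
  have := hm.add (hsq.zero_mul_isBoundedUnder_le hv)
  rw [add_zero] at this
  refine this.congr' ?_
  filter_upwards [self_mem_nhdsWithin] with r (hr : 0 < r)
  simp only [riccatiLyapunov]
  field_simp
  ring

theorem riccatiLyapunov_nonpos (ha : 0 < a)
    (hm : ∀ x ∈ Ioo 0 R, HasDerivAt m (m' x) x) (hv : ∀ x ∈ Ioo 0 R, HasDerivAt v (v' x) x)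
    (hvθ : ∀ x ∈ Ioo 0 R, v x ≤ θ)
    (hriccati : ∀ x ∈ Ioo 0 R, m' x ≤ -(m x) ^ 2 / a - v' x)
    (hlim : Tendsto (riccatiLyapunov a θ m v) (𝓝[>] 0) (𝓝 0)) :
    ∀ r ∈ Ioo 0 R, riccatiLyapunov a θ m v r ≤ 0 := by
  refine fun r hr ↦ le_of_hasDerivAt_nonpos_of_tendsto
    (fun x hx ↦ hasDerivAt_riccatiLyapunov (hm x hx) (hv x hx)) (fun x hx ↦ ?_) hlim hr
  have hsquare : x ^ 2 * (m' x + v' x) ≤ a - 2 * x * m x := calc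
    x ^ 2 * (m' x + v' x) ≤ x ^ 2 * (-(m x) ^ 2 / a) := by
      gcongr
      linarith [hriccati x hx]
    _ = -(x * m x) ^ 2 / a := by ring
    _ ≤ a - 2 * (x * m x) := neg_sq_div_le_sub_two_mul ha _
    _ = a - 2 * x * m x := by ring
  nlinarith [mul_le_mul_of_nonneg_left (hvθ x hx) hx.1.le]

theorem le_div_add_of_riccatiLyapunov_nonpos {r : ℝ} (hr : 0 < r) (hvr : -θ ≤ v r)
    (hG : riccatiLyapunov a θ m v r ≤ 0) : m r ≤ a / r + 2 * θ := by
  have hrG : r * (r * m r + r * (v r - θ) - a) ≤ 0 := by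
    unfold riccatiLyapunov at hG
    linarith
  rw [div_add' _ _ _ hr.ne', le_div_iff₀ hr]
  linarith [nonpos_of_mul_nonpos_right hrG hr, mul_le_mul_of_nonneg_left hvr hr.le]

end

theorem laplacian_comparison_ODE_flat_general (n : ℕ) (hn : 2 ≤ n) (θ R : ℝ)
    (m m' v v' : ℝ → ℝ)
    (hm : ∀ r ∈ Ioo (0 : ℝ) R, HasDerivAt m (m' r) r)
    (hv : ∀ r ∈ Ico (0 : ℝ) R, HasDerivWithinAt v (v' r) (Ico (0 : ℝ) R) r)
    (hvθ : ∀ r ∈ Ico (0 : ℝ) R, |v r| ≤ θ)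
    (hriccati : ∀ r ∈ Ioo (0 : ℝ) R, m' r ≤ -(m r) ^ 2 / ((n : ℝ) - 1) - v' r)
    (hlim : Filter.Tendsto (fun r => r ^ 2 * (m r - ((n : ℝ) - 1) / r))
      (nhdsWithin 0 (Ioi (0 : ℝ))) (nhds 0)) :
    ∀ r ∈ Ioo (0 : ℝ) R, m r ≤ ((n : ℝ) - 1) / r + 2 * θ := by
  intro r hr
  have ha : (0 : ℝ) < n - 1 := by
    have : (2 : ℝ) ≤ n := by exact_mod_cast hn
    linarith
  have hvθ' : ∀ x ∈ Ioo 0 R, |v x| ≤ θ := fun x hx ↦ hvθ x (Ioo_subset_Ico_self hx)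
  have hv' : ∀ x ∈ Ioo 0 R, HasDerivAt v (v' x) x :=
    fun x hx ↦ (hv x (Ioo_subset_Ico_self hx)).hasDerivAt (Ico_mem_nhds hx.1 hx.2)
  have hbdd : IsBoundedUnder (· ≤ ·) (𝓝[>] 0) (fun x ↦ ‖v x - θ‖) := by
    refine isBoundedUnder_of_eventually_le (a := 2 * θ) ?_
    filter_upwards [Ioo_mem_nhdsGT (hr.1.trans hr.2)] with x hx
    have := abs_le.mp (hvθ' x hx)
    rw [Real.norm_eq_abs, abs_le]
    constructor <;> linarith
  exact le_div_add_of_riccatiLyapunov_nonpos hr.1 (abs_le.mp (hvθ' r hr)).1 <|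
    riccatiLyapunov_nonpos ha hm hv' (fun x hx ↦ (abs_le.mp (hvθ' x hx)).2) hriccati
      (tendsto_riccatiLyapunov hlim hbdd) r hr

/-- ODE comparison content of the Laplacian comparison theorem (Theorem 2.1, `K = 0`):
if `m` is `C¹` on `(0,R)`, `v` is `C¹` on `[0,R)` with `|v| ≤ θ`, the Riccati inequality
`m' ≤ −m²/(n−1) − v'` holds on `(0,R)`, and `r²(m(r) − (n−1)/r) → 0` as `r → 0⁺`, then
`m(r) ≤ (n−1)/r + 2θ` on `(0,R)`. -/
theorem laplacian_comparison_ODE_flat (n : ℕ) (hn : 2 ≤ n) (θ R : ℝ)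
    (hθ : 0 ≤ θ) (hR : 0 < R)
    (m m' v v' : ℝ → ℝ)
    (hm : ∀ r ∈ Ioo (0 : ℝ) R, HasDerivAt m (m' r) r)
    (hm' : ContinuousOn m' (Ioo (0 : ℝ) R))
    (hv : ∀ r ∈ Ico (0 : ℝ) R, HasDerivWithinAt v (v' r) (Ico (0 : ℝ) R) r)
    (hv' : ContinuousOn v' (Ico (0 : ℝ) R))
    (hvθ : ∀ r ∈ Ico (0 : ℝ) R, |v r| ≤ θ)
    (hriccati : ∀ r ∈ Ioo (0 : ℝ) R, m' r ≤ -(m r) ^ 2 / ((n : ℝ) - 1) - v' r)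
    (hlim : Filter.Tendsto (fun r => r ^ 2 * (m r - ((n : ℝ) - 1) / r))
      (nhdsWithin 0 (Ioi (0 : ℝ))) (nhds 0)) :
    ∀ r ∈ Ioo (0 : ℝ) R, m r ≤ ((n : ℝ) - 1) / r + 2 * θ :=
  laplacian_comparison_ODE_flat_general n hn θ R m m' v v' hm hv hvθ hriccati hlim
end

section
/- Let n ≥ 2 be an integer, c ≥ 0, b > 0, and let J : (0,b) → ℝ be a positive continuous function, integrable on (0,r) for every r < b, satisfying J(t₂)/J(t₁) ≤ (t₂/t₁)^{n−1} · exp(c·(t₂ − t₁)) for all 0 < t₁ ≤ t₂ < b. Then for all 0 < r₁ ≤ r₂ < b: (∫₀^{r₂} J(t) dt) / (∫₀^{r₁} J(t) dt) ≤ (r₂/r₁)^n · exp(c·(r₂ − r₁)). -/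
open Set MeasureTheory intervalIntegral

/-- Analytic core of the volume comparison Theorem 2.2(ii): if `J > 0` is continuous and
locally integrable on `(0,b)` and satisfies
`J(t₂)/J(t₁) ≤ (t₂/t₁)^{n−1} exp(c(t₂ − t₁))` for `0 < t₁ ≤ t₂ < b`, then
`(∫₀^{r₂} J)/(∫₀^{r₁} J) ≤ (r₂/r₁)^n exp(c(r₂ − r₁))` for `0 < r₁ ≤ r₂ < b`. -/
theorem volume_comparison (n : ℕ) (hn : 2 ≤ n) (c b : ℝ) (hc : 0 ≤ c) (hb : 0 < b)
    (J : ℝ → ℝ)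
    (hJ_pos : ∀ r ∈ Ioo (0 : ℝ) b, 0 < J r)
    (hJ_cont : ContinuousOn J (Ioo (0 : ℝ) b))
    (hJ_int : ∀ r : ℝ, 0 < r → r < b → IntervalIntegrable J volume 0 r)
    (hratio : ∀ t₁ t₂ : ℝ, 0 < t₁ → t₁ ≤ t₂ → t₂ < b →
      J t₂ / J t₁ ≤ (t₂ / t₁) ^ (n - 1) * Real.exp (c * (t₂ - t₁))) :
    ∀ r₁ r₂ : ℝ, 0 < r₁ → r₁ ≤ r₂ → r₂ < b →
      (∫ t in (0 : ℝ)..r₂, J t) / (∫ t in (0 : ℝ)..r₁, J t) ≤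
        (r₂ / r₁) ^ n * Real.exp (c * (r₂ - r₁)) := by
  intro r₁ r₂ hr₁ hr₁₂ hr₂
  have hr₁b : r₁ < b := lt_of_le_of_lt hr₁₂ hr₂
  have hr₂0 : 0 < r₂ := lt_of_lt_of_le hr₁ hr₁₂
  set k := r₂ / r₁ with hk
  have hk1 : 1 ≤ k := (one_le_div hr₁).2 hr₁₂
  have hk0 : 0 < k := lt_of_lt_of_le one_pos hk1
  have hkr : k * r₁ = r₂ := div_mul_cancel₀ _ hr₁.ne'
  have hIpos : 0 < ∫ t in (0:ℝ)..r₁, J t :=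
    intervalIntegral.intervalIntegral_pos_of_pos_on (hJ_int r₁ hr₁ hr₁b)
      (fun x hx => hJ_pos x ⟨hx.1, hx.2.trans hr₁b⟩) hr₁
  rw [div_le_iff₀ hIpos]
  have hsub : ∫ t in (0:ℝ)..r₂, J t = k * ∫ s in (0:ℝ)..r₁, J (k * s) := by
    rw [intervalIntegral.integral_comp_mul_left J hk0.ne']
    rw [mul_zero, hkr, smul_eq_mul, ← mul_assoc, mul_inv_cancel₀ hk0.ne', one_mul]
  have hint1 : IntervalIntegrable (fun s => J (k * s)) volume 0 r₁ := by
    have := (hJ_int r₂ hr₂0 hr₂).comp_mul_left (c := k)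
    have h1 : (0:ℝ) / k = 0 := zero_div k
    have h2 : r₂ / k = r₁ := by rw [hk]; field_simp
    rwa [h1, h2] at this
  have hint2 : IntervalIntegrable (fun s => (k ^ (n-1) * Real.exp (c * (r₂ - r₁))) * J s) volume 0 r₁ :=
    (hJ_int r₁ hr₁ hr₁b).const_mul _
  have h0 : ∀ᵐ s : ℝ ∂volume, s ≠ 0 := by
    rw [ae_iff]
    simp [Real.volume_singleton]
  have hae : (fun s => J (k * s)) ≤ᵐ[volume.restrict (Icc 0 r₁)]
      fun s => (k ^ (n-1) * Real.exp (c * (r₂ - r₁))) * J s := by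
    filter_upwards [ae_restrict_mem measurableSet_Icc, ae_restrict_of_ae h0] with s hs hs0
    have hspos : 0 < s := lt_of_le_of_ne hs.1 (Ne.symm hs0)
    have hks_le : k * s ≤ r₂ := by
      calc k * s ≤ k * r₁ := mul_le_mul_of_nonneg_left hs.2 hk0.le
        _ = r₂ := hkr
    have hJs : 0 < J s := hJ_pos s ⟨hspos, lt_of_le_of_lt hs.2 hr₁b⟩
    have h := hratio s (k * s) hspos (le_mul_of_one_le_left hspos.le hk1)
      (lt_of_le_of_lt hks_le hr₂)
    rw [mul_div_assoc, div_self hspos.ne', mul_one] at h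
    have hexp : Real.exp (c * (k * s - s)) ≤ Real.exp (c * (r₂ - r₁)) := by
      apply Real.exp_le_exp.2
      have : k * s - s ≤ r₂ - r₁ := by nlinarith
      nlinarith
    have := (div_le_iff₀ hJs).1 h
    calc J (k * s) ≤ k ^ (n-1) * Real.exp (c * (k * s - s)) * J s := this
      _ ≤ k ^ (n-1) * Real.exp (c * (r₂ - r₁)) * J s := by
          have hkp : (0:ℝ) ≤ k ^ (n-1) := pow_nonneg hk0.le _
          exact mul_le_mul_of_nonneg_right (mul_le_mul_of_nonneg_left hexp hkp) hJs.le
  have hmono := intervalIntegral.integral_mono_ae_restrict hr₁.le hint1 hint2 hae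
  rw [intervalIntegral.integral_const_mul] at hmono
  have hpown : k ^ (n-1) * k = k ^ n := by
    rw [← pow_succ]
    congr 1
    omega
  calc ∫ t in (0:ℝ)..r₂, J t = k * ∫ s in (0:ℝ)..r₁, J (k * s) := hsub
    _ ≤ k * (k ^ (n-1) * Real.exp (c * (r₂ - r₁)) * ∫ t in (0:ℝ)..r₁, J t) := by
        apply mul_le_mul_of_nonneg_left hmono hk0.le
    _ = k ^ n * Real.exp (c * (r₂ - r₁)) * ∫ t in (0:ℝ)..r₁, J t := by
        rw [← hpown]; ring
end

section
/- Let μ > 2 be a real number, b₀ ≥ 1, b₁ ≥ 1, M ≥ 1, and define b_i := b₁·(μ/(μ−2))^{i−1} for i ≥ 1. Let (a_i)_{i≥1} be a sequence of positive real numbers satisfying a_{i+1} ≤ (M·(b₀²·b_i + 16^i))^{1/b_i} · a_i for all i ≥ 1. Then there exists a constant C > 0 (depending only on μ, b₀, b₁, M) such that a_i ≤ C·a₁ for all i ≥ 1. -/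
/-- Abstract Moser iteration step for estimate (3.17): for `μ > 2`, `b₀, b₁, M ≥ 1`,
`b_i = b₁(μ/(μ−2))^{i−1}`, and positive `a_i` with
`a_{i+1} ≤ (M(b₀²b_i + 16^i))^{1/b_i} a_i`, there is `C > 0` with `a_i ≤ C a₁` for all
`i ≥ 1`. -/
theorem moser_iteration (μ b₀ b₁ M : ℝ) (hμ : 2 < μ) (hb₀ : 1 ≤ b₀) (hb₁ : 1 ≤ b₁)
    (hM : 1 ≤ M)
    (b : ℕ → ℝ) (hb : ∀ i : ℕ, 1 ≤ i → b i = b₁ * (μ / (μ - 2)) ^ (i - 1))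
    (a : ℕ → ℝ) (ha_pos : ∀ i : ℕ, 1 ≤ i → 0 < a i)
    (hrec : ∀ i : ℕ, 1 ≤ i →
      a (i + 1) ≤ (M * (b₀ ^ 2 * b i + 16 ^ i)) ^ (1 / b i) * a i) :
    ∃ C : ℝ, 0 < C ∧ ∀ i : ℕ, 1 ≤ i → a i ≤ C * a 1 := by
  have hμ2 : (0:ℝ) < μ - 2 := by linarith
  have hμ0 : (0:ℝ) < μ := by linarith
  set q : ℝ := μ / (μ - 2) with hq
  have hq1 : 1 < q := by
    rw [hq, lt_div_iff₀ hμ2]; linarith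
  set r : ℝ := (μ - 2) / μ with hr
  have hr0 : 0 < r := div_pos hμ2 hμ0
  have hr1 : r < 1 := by
    rw [hr, div_lt_one hμ0]; linarith
  have hrq : r * q = 1 := by
    rw [hr, hq, div_mul_div_comm, mul_comm (μ - 2) μ, div_self (mul_ne_zero hμ0.ne' hμ2.ne')]
  -- the master constant K
  set K : ℝ := M * (b₀ ^ 2 * b₁ + 1) * max q 16 with hK
  have hK1 : 1 ≤ K := by
    have h1 : (1:ℝ) ≤ b₀ ^ 2 * b₁ + 1 := by nlinarith
    have h2 : (1:ℝ) ≤ max q 16 := le_trans (by norm_num) (le_max_right _ _)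
    have hA : (1:ℝ) ≤ M * (b₀ ^ 2 * b₁ + 1) := by
      have := mul_le_mul hM h1 zero_le_one (le_trans zero_le_one hM)
      simpa using this
    have := mul_le_mul hA h2 zero_le_one (le_trans zero_le_one hA)
    simpa [hK] using this
  have hK0 : 0 < K := lt_of_lt_of_le one_pos hK1
  -- positivity of b i
  have hbpos : ∀ i : ℕ, 1 ≤ i → 0 < b i := by
    intro i hi
    rw [hb i hi]
    exact mul_pos (by linarith) (pow_pos (by linarith) _)
  -- 1 / b i ≤ r ^ (i-1)
  have hbinv : ∀ i : ℕ, 1 ≤ i → 1 / b i ≤ r ^ (i - 1) := by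
    intro i hi
    rw [hb i hi]
    have hq0 : 0 < q := by linarith
    have hrq' : r ^ (i-1) * q ^ (i-1) = 1 := by
      rw [← mul_pow, hrq, one_pow]
    rw [div_le_iff₀ (mul_pos (by linarith) (pow_pos hq0 _))]
    calc (1:ℝ) = r ^ (i-1) * q ^ (i-1) := hrq'.symm
      _ ≤ r ^ (i-1) * (b₁ * q ^ (i-1)) := by
          have := pow_pos hq0 (i-1)
          have := pow_pos hr0 (i-1)
          nlinarith
  -- the factor bound: X i ≤ K ^ i
  have hX1 : ∀ i : ℕ, 1 ≤ i → 1 ≤ M * (b₀ ^ 2 * b i + 16 ^ i) := by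
    intro i hi
    have hbi := hbpos i hi
    have h16 : (1:ℝ) ≤ 16 ^ i := one_le_pow₀ (by norm_num)
    have hsq : (0:ℝ) < b₀ ^ 2 * b i := mul_pos (by positivity) hbi
    have h : (1:ℝ) ≤ b₀ ^ 2 * b i + 16 ^ i := by linarith
    have := mul_le_mul hM h zero_le_one (le_trans zero_le_one hM)
    simpa using this
  have hXK : ∀ i : ℕ, 1 ≤ i → M * (b₀ ^ 2 * b i + 16 ^ i) ≤ K ^ i := by
    intro i hi
    have hq0 : 0 < q := by linarith
    have hm : (1:ℝ) ≤ max q 16 := le_trans (by norm_num) (le_max_right _ _)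
    have hbi : b i ≤ b₁ * max q 16 ^ i := by
      rw [hb i hi]
      have h1 : q ^ (i - 1) ≤ max q 16 ^ i := by
        calc q ^ (i-1) ≤ max q 16 ^ (i-1) :=
              pow_le_pow_left₀ (le_of_lt hq0) (le_max_left _ _) _
          _ ≤ max q 16 ^ i := pow_le_pow_right₀ hm (Nat.sub_le _ _)
      nlinarith
    have h16 : (16:ℝ) ^ i ≤ max q 16 ^ i :=
      pow_le_pow_left₀ (by norm_num) (le_max_right _ _) _
    have hA : (1:ℝ) ≤ M * (b₀ ^ 2 * b₁ + 1) := by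
      have h1 : (1:ℝ) ≤ b₀ ^ 2 * b₁ + 1 := by nlinarith
      have := mul_le_mul hM h1 zero_le_one (le_trans zero_le_one hM)
      simpa using this
    have hstep : M * (b₀ ^ 2 * b i + 16 ^ i) ≤ (M * (b₀ ^ 2 * b₁ + 1)) * max q 16 ^ i := by
      have hM0 : (0:ℝ) ≤ M := le_trans zero_le_one hM
      nlinarith [mul_nonneg (mul_nonneg hM0 (sq_nonneg b₀)) (sub_nonneg.2 hbi),
        mul_nonneg hM0 (sub_nonneg.2 h16)]
    calc M * (b₀ ^ 2 * b i + 16 ^ i) ≤ (M * (b₀ ^ 2 * b₁ + 1)) * max q 16 ^ i := hstep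
      _ ≤ (M * (b₀ ^ 2 * b₁ + 1)) ^ i * max q 16 ^ i := by
          gcongr
          exact le_self_pow₀ hA (by omega)
      _ = K ^ i := by conv_rhs => rw [hK, mul_pow]
  -- the per-step factor is bounded by exp (log K * ((i) * r^(i-1)))
  have hfac : ∀ i : ℕ, 1 ≤ i →
      (M * (b₀ ^ 2 * b i + 16 ^ i)) ^ (1 / b i) ≤
        Real.exp (Real.log K * ((i : ℝ) * r ^ (i - 1))) := by
    intro i hi
    have hbi := hbpos i hi
    have hXpos : (0:ℝ) < M * (b₀ ^ 2 * b i + 16 ^ i) :=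
      lt_of_lt_of_le one_pos (hX1 i hi)
    have hinv : 0 ≤ 1 / b i := by positivity
    calc (M * (b₀ ^ 2 * b i + 16 ^ i)) ^ (1 / b i)
        ≤ (K ^ i : ℝ) ^ (1 / b i) := by
          exact Real.rpow_le_rpow (le_of_lt hXpos) (hXK i hi) hinv
      _ = K ^ ((i : ℝ) * (1 / b i)) := by
          rw [← Real.rpow_natCast K i, ← Real.rpow_mul (le_of_lt hK0)]
      _ ≤ K ^ ((i : ℝ) * r ^ (i - 1)) := by
          apply Real.rpow_le_rpow_of_exponent_le hK1
          have hi0 : (0:ℝ) ≤ (i : ℝ) := Nat.cast_nonneg _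
          exact mul_le_mul_of_nonneg_left (hbinv i hi) hi0
      _ = Real.exp (Real.log K * ((i : ℝ) * r ^ (i - 1))) := by
          rw [Real.rpow_def_of_pos hK0]
  -- bound on partial sums of ∑ (j+1) r^j
  set S : ℝ := r / (1 - r) ^ 2 + (1 - r)⁻¹ with hS
  have hsum : ∀ n : ℕ, ∑ j ∈ Finset.range n, ((j : ℝ) + 1) * r ^ j ≤ S := by
    intro n
    have h1 : HasSum (fun j : ℕ => (j : ℝ) * r ^ j) (r / (1 - r) ^ 2) :=
      hasSum_coe_mul_geometric_of_norm_lt_one (by rw [Real.norm_eq_abs, abs_of_pos hr0]; exact hr1)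
    have h2 : HasSum (fun j : ℕ => r ^ j) ((1 - r)⁻¹) :=
      hasSum_geometric_of_lt_one (le_of_lt hr0) hr1
    have h3 : HasSum (fun j : ℕ => ((j : ℝ) + 1) * r ^ j) S := by
      have := h1.add h2
      simpa [add_mul] using this
    exact sum_le_hasSum _ (fun j _ => by positivity) h3
  have hlogK : 0 ≤ Real.log K := Real.log_nonneg hK1
  refine ⟨Real.exp (Real.log K * S), Real.exp_pos _, ?_⟩
  -- main induction
  have main : ∀ i : ℕ, 1 ≤ i →
      a i ≤ Real.exp (Real.log K * ∑ j ∈ Finset.range (i - 1), ((j : ℝ) + 1) * r ^ j) * a 1 := by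
    intro i hi
    induction i, hi using Nat.le_induction with
    | base => simp
    | succ n hn ih =>
      have hfn := hfac n hn
      have han := ha_pos n hn
      have ha1 := ha_pos 1 le_rfl
      have hXpos : (0:ℝ) < (M * (b₀ ^ 2 * b n + 16 ^ n)) ^ (1 / b n) := by
        apply Real.rpow_pos_of_pos
        exact lt_of_lt_of_le one_pos (hX1 n hn)
      have hsum_succ : ∑ j ∈ Finset.range (n + 1 - 1), ((j : ℝ) + 1) * r ^ j
          = (∑ j ∈ Finset.range (n - 1), ((j : ℝ) + 1) * r ^ j) + (n : ℝ) * r ^ (n - 1) := by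
        have hn' : n - 1 + 1 = n := Nat.succ_pred_eq_of_pos hn
        have hc : ((n - 1 : ℕ) : ℝ) = (n : ℝ) - 1 := by
          rw [Nat.cast_sub hn]; norm_num
        rw [Nat.add_sub_cancel]
        conv_lhs => rw [← hn', Finset.sum_range_succ]
        rw [hc]
        ring
      calc a (n + 1) ≤ (M * (b₀ ^ 2 * b n + 16 ^ n)) ^ (1 / b n) * a n := hrec n hn
        _ ≤ Real.exp (Real.log K * ((n : ℝ) * r ^ (n - 1))) *
              (Real.exp (Real.log K * ∑ j ∈ Finset.range (n - 1), ((j : ℝ) + 1) * r ^ j) * a 1) := by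
            apply mul_le_mul hfn ih (le_of_lt han) (Real.exp_nonneg _)
        _ = Real.exp (Real.log K * ∑ j ∈ Finset.range (n + 1 - 1), ((j : ℝ) + 1) * r ^ j) * a 1 := by
            have harg : Real.log K * ((n:ℝ) * r ^ (n - 1)) +
                Real.log K * ∑ j ∈ Finset.range (n - 1), ((j : ℝ) + 1) * r ^ j =
                Real.log K * ((∑ j ∈ Finset.range (n - 1), ((j : ℝ) + 1) * r ^ j) +
                  (n : ℝ) * r ^ (n - 1)) := by ring
            rw [hsum_succ, ← mul_assoc, ← Real.exp_add, harg]
  intro i hi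
  have h := main i hi
  have ha1 := ha_pos 1 le_rfl
  refine h.trans ?_
  have hC : Real.exp (Real.log K * ∑ j ∈ Finset.range (i - 1), ((j : ℝ) + 1) * r ^ j)
      ≤ Real.exp (Real.log K * S) :=
    Real.exp_le_exp.2 (mul_le_mul_of_nonneg_left (hsum _) hlogK)
  exact mul_le_mul_of_nonneg_right hC ha1.le
end
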